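/- For every choice of positive integers c, n, κ with m ≥ n + κ + 1 and d ≥ 4c, if Γ : ({0,1}^n)^c → ({0,1}^m)^d is chosen so that its restriction to every subset of size at most 2^κ is uniformly random on that subset (2^κ-independent), then with probability at least 1 − 2^{−dn/2}, Γ is 2^κ-unique: every nonempty subset S of size at most 2^κ contains x with at least one unique position-sensitive neighbor. -/

import Mathlib

/-
If `Γ` is not `2^κ`-unique, some `S` with `2 ≤ |S| ≤ 2^κ` (a single point always has a unique
neighbour, as `d > 0`) is such that in every coordinate `i` each value `Γ(x)_i`, `x ∈ S`, is taken
at least twice on `S`. Such a map `S → {0,1}^m` has at most `h = ⌊|S|/2⌋` values, so there are at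
most `C(2^m, h) h^|S|` of them. By `2^κ`-independence the `d` coordinates of `Γ` on `S` are
independent and uniform, so the event has probability at most `(C(2^m, h) (h / 2^m)^|S|)^d`, which
is `≤ q^|S|` with `q = 2^(-dn/2)` because `2^m ≥ 2|S| 2^n`. With `M = 2^(nc)` points, the union
bound gives `∑_{s ≥ 2} C(M, s) q^s ≤ ∑_{s ≥ 2} (Mq)^s / s! ≤ e^(Mq) - 1 - Mq ≤ (Mq)^2 ≤ q`,
the last step by `d ≥ 4c`.
-/

open Finset
open scoped Classical

/-- Position-sensitive neighborhood: `nbr Γ S = {(i, Γ x i) : x ∈ S, i}`. -/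
def nbr {U V ι : Type*} [DecidableEq V] [DecidableEq ι] [Fintype ι]
    (Γ : U → ι → V) (S : Finset U) : Finset (ι × V) :=
  (S ×ˢ (Finset.univ : Finset ι)).image (fun p => (p.2, Γ p.1 p.2))

open scoped Nat

theorem pow_self_le_four_pow_mul_factorial (h : ℕ) : h ^ h ≤ 4 ^ h * h ! :=
  calc h ^ h ≤ (2 * h + 1 - h) ^ h := Nat.pow_le_pow_left (by omega) h
    _ ≤ (2 * h).descFactorial h := Nat.pow_sub_le_descFactorial _ _
    _ = h ! * (2 * h).choose h := Nat.descFactorial_eq_factorial_mul_choose _ _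
    _ ≤ h ! * 4 ^ h := Nat.mul_le_mul_left _ <| (Nat.choose_le_two_pow _ _).trans_eq <| by
        rw [pow_mul]; norm_num
    _ = 4 ^ h * h ! := mul_comm _ _

/-- `C(N, h) (h / N)^s ≤ 2^(-ns/2)`, squared to stay in `ℕ`. -/
theorem choose_mul_pow_sq_mul_two_pow_le {N h s n : ℕ} (hs : 2 * h ≤ s)
    (hN : 4 * h * 2 ^ n ≤ N) : (N.choose h * h ^ s) ^ 2 * 2 ^ (n * s) ≤ N ^ (2 * s) := by
  obtain ⟨e, rfl⟩ := Nat.exists_eq_add_of_le hs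
  have hhN : h ≤ N := le_trans (by nlinarith [Nat.one_le_two_pow (n := n)]) hN
  have hchoose : N.choose h * h ! ≤ N ^ h := by
    rw [mul_comm, ← Nat.descFactorial_eq_factorial_mul_choose]
    exact Nat.descFactorial_le_pow _ _
  refine Nat.le_of_mul_le_mul_right (c := h ! ^ 2 * 4 ^ (2 * h + e)) ?_ (by positivity)
  calc (N.choose h * h ^ (2 * h + e)) ^ 2 * 2 ^ (n * (2 * h + e)) * (h ! ^ 2 * 4 ^ (2 * h + e))
      = (N.choose h * h !) ^ 2 * (h ^ h) ^ 2 * h ^ e * (4 * h * 2 ^ n) ^ (2 * h + e) := by ring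
    _ ≤ (N ^ h) ^ 2 * (4 ^ h * h !) ^ 2 * N ^ e * N ^ (2 * h + e) := by
        gcongr
        exact pow_self_le_four_pow_mul_factorial h
    _ = N ^ (2 * (2 * h + e)) * (h ! ^ 2 * 4 ^ (2 * h)) := by ring
    _ ≤ N ^ (2 * (2 * h + e)) * (h ! ^ 2 * 4 ^ (2 * h + e)) := by
        gcongr
        omega

theorem le_mul_two_rpow_neg_half_pow {a b : ℝ} (ha : 0 ≤ a) (hb : 0 ≤ b) {k s : ℕ}
    (h : a ^ 2 * 2 ^ (k * s) ≤ b ^ 2) : a ≤ b * ((2 : ℝ) ^ (-((k : ℝ) / 2))) ^ s := by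
  set t : ℝ := ((2 : ℝ) ^ ((k : ℝ) / 2)) ^ s
  have ht2 : t ^ 2 = 2 ^ (k * s) := by
    rw [← pow_mul, mul_comm s, pow_mul, ← Real.rpow_mul_natCast (by norm_num)]
    norm_num [pow_mul]
  rw [Real.rpow_neg (by norm_num), inv_pow, ← div_eq_mul_inv, le_div_iff₀ (by positivity)]
  refine (pow_le_pow_iff_left₀ (by positivity) hb two_ne_zero).1 ?_
  rwa [mul_pow, ht2]

theorem two_pow_sq_mul_two_rpow_le_one {c d n : ℕ} (hd : 4 * c ≤ d) :
    ((2 : ℝ) ^ (n * c)) ^ 2 * (2 : ℝ) ^ (-((d * n : ℝ) / 2)) ≤ 1 := by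
  rw [← pow_mul, ← Real.rpow_natCast, ← Real.rpow_add (by norm_num)]
  apply Real.rpow_le_one_of_one_le_of_nonpos (by norm_num)
  have : (4 * c : ℝ) ≤ d := by exact_mod_cast hd
  push_cast
  nlinarith [(n.cast_nonneg : (0 : ℝ) ≤ n)]

section NoSingletonFiber

def NoSingletonFiber {α β : Type*} (f : α → β) : Prop := ∀ a, ∃ b, b ≠ a ∧ f b = f a

variable {α β : Type*} [Fintype α]

theorem NoSingletonFiber.one_lt_card [Nonempty α] {f : α → β} (hf : NoSingletonFiber f) :
    1 < Fintype.card α :=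
  let ⟨b, hba, _⟩ := hf (Classical.arbitrary α)
  Fintype.one_lt_card_iff.2 ⟨b, _, hba⟩

theorem NoSingletonFiber.two_mul_card_image_le [DecidableEq β] {f : α → β}
    (hf : NoSingletonFiber f) : 2 * #(univ.image f) ≤ Fintype.card α := by
  rw [← card_univ, card_eq_sum_card_image f univ, mul_comm, ← smul_eq_mul, ← sum_const]
  refine sum_le_sum fun v hv => ?_
  obtain ⟨a, -, rfl⟩ := mem_image.1 hv
  obtain ⟨b, hba, hfb⟩ := hf a
  exact Finset.one_lt_card.2 ⟨a, by simp, b, by simp [hfb], hba.symm⟩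

theorem card_filter_noSingletonFiber_le [DecidableEq α] [Fintype β] [DecidableEq β] {h : ℕ}
    (hα : Fintype.card α ≤ 2 * h + 1) (hβ : h ≤ Fintype.card β) :
    #{f : α → β | NoSingletonFiber f} ≤ (Fintype.card β).choose h * h ^ Fintype.card α := by
  have hcover : ({f : α → β | NoSingletonFiber f} : Finset (α → β)) ⊆
      (powersetCard h univ).biUnion fun R => Fintype.piFinset fun _ => R := by
    intro f hf
    have himage : #(univ.image f) ≤ h := by
      have := (mem_filter.1 hf).2.two_mul_card_image_le
      omega
    obtain ⟨R, hfR, -, hR⟩ := exists_subsuperset_card_eq (subset_univ (univ.image f)) himage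
      (by simpa using hβ)
    exact mem_biUnion.2 ⟨R, mem_powersetCard.2 ⟨subset_univ R, hR⟩,
      Fintype.mem_piFinset.2 fun a => hfR (mem_image_of_mem f (mem_univ a))⟩
  calc _ ≤ _ := card_le_card hcover
    _ ≤ ∑ R ∈ powersetCard h (univ : Finset β), #(Fintype.piFinset fun _ : α => R) :=
        card_biUnion_le
    _ = (Fintype.card β).choose h * h ^ Fintype.card α := by
        rw [sum_congr rfl fun R hR => by
          rw [Fintype.card_piFinset, prod_const, (mem_powersetCard.1 hR).2, card_univ]]
        simp

theorem card_filter_forall_coord [DecidableEq α] {ι : Type*} [Fintype ι] [DecidableEq ι]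
    [Fintype β] (P : (α → β) → Prop) [DecidablePred P] :
    #{g : α → ι → β | ∀ i, P fun a => g a i} = #{f : α → β | P f} ^ Fintype.card ι := by
  simp only [← Fintype.card_subtype]
  rw [← Fintype.card_fun]
  exact Fintype.card_congr <|
    ((Equiv.piComm fun (_ : α) (_ : ι) => β).subtypeEquiv fun _ => Iff.rfl).trans
      (Equiv.subtypePiEquivPi (p := fun _ => P))

end NoSingletonFiber

section Neighborhood

variable {U V ι : Type*} [DecidableEq V] [DecidableEq ι] [Fintype ι]

theorem mem_nbr {Γ : U → ι → V} {S : Finset U} {p : ι × V} :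
    p ∈ nbr Γ S ↔ ∃ x ∈ S, Γ x p.1 = p.2 := by
  simp [nbr, Prod.ext_iff, and_comm, eq_comm]

theorem nbr_singleton_subset_iff {Γ : U → ι → V} {x : U} {T : Finset U} :
    nbr Γ {x} ⊆ nbr Γ T ↔ ∀ i, ∃ y ∈ T, Γ y i = Γ x i := by
  simp [subset_iff, mem_nbr]

variable [DecidableEq U]

-- An `abbrev`, so that the `Decidable` instance of the filter in `stmt9` is found through it.
abbrev IsKUnique (Γ : U → ι → V) (k : ℕ) : Prop :=
  ∀ S : Finset U, S.Nonempty → S.card ≤ k → ∃ x ∈ S, 0 < (nbr Γ {x} \ nbr Γ (S.erase x)).card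

theorem exists_card_sdiff_nbr_pos_iff {Γ : U → ι → V} {S : Finset U} :
    (∃ x ∈ S, 0 < #(nbr Γ {x} \ nbr Γ (S.erase x))) ↔
      ¬ ∀ i, NoSingletonFiber fun x : S => Γ x i := by
  rw [← not_iff_not, not_not]
  simp only [not_exists, not_and, not_lt, Nat.le_zero, card_eq_zero, sdiff_eq_empty_iff_subset,
    nbr_singleton_subset_iff]
  constructor
  · rintro h i ⟨x, hx⟩
    obtain ⟨y, hy, hxy⟩ := h x hx i
    exact ⟨⟨y, mem_of_mem_erase hy⟩, fun h => ne_of_mem_erase hy (congrArg Subtype.val h), hxy⟩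
  · intro h x hx i
    obtain ⟨⟨y, hy⟩, hyx, hxy⟩ := h i ⟨x, hx⟩
    exact ⟨y, mem_erase.2 ⟨fun h => hyx (Subtype.ext h), hy⟩, hxy⟩

theorem card_filter_not_isKUnique_le [Fintype U] [Nonempty ι] {Ω : Type*} [Fintype Ω]
    (G : Ω → U → ι → V) (k : ℕ) :
    #{ω | ¬ IsKUnique (G ω) k} ≤ ∑ S ∈ (univ : Finset U).powerset with 2 ≤ #S ∧ #S ≤ k,
      #{ω | ∀ i, NoSingletonFiber fun x : S => G ω x i} := by
  refine (card_le_card fun ω hω => ?_).trans card_biUnion_le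
  simp only [mem_filter, mem_univ, true_and, not_forall, exists_prop] at hω
  obtain ⟨S, hSne, hSk, hS⟩ := hω
  rw [exists_card_sdiff_nbr_pos_iff, not_not] at hS
  have : Nonempty S := hSne.to_subtype
  have h2 : 1 < #S := by simpa using (hS (Classical.arbitrary ι)).one_lt_card
  refine mem_biUnion.2 ⟨S, ?_, by simpa using hS⟩
  simp only [mem_filter, mem_powerset]
  exact ⟨subset_univ S, h2, hSk⟩

end Neighborhood

section Sampling

variable {Ω U : Type*} [Fintype Ω] [DecidableEq U]

theorem card_filter_comp_mul_eq {α : Type*} [Fintype α] (r : Ω → α) {K : ℕ}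
    (hr : ∀ a, #{ω | r ω = a} * K = Fintype.card Ω) (P : α → Prop) [DecidablePred P] :
    #{ω | P (r ω)} * K = #{a | P a} * Fintype.card Ω := by
  rw [card_eq_sum_card_fiberwise (f := r) (t := {a | P a}) (fun ω hω => by simpa using hω),
    sum_mul, card_eq_sum_ones, sum_mul, one_mul]
  refine sum_congr rfl fun a ha => ?_
  rw [← hr a, filter_filter]
  congr 2
  ext ω
  simp only [mem_filter, mem_univ, true_and]
  exact ⟨And.right, fun h => ⟨h ▸ (mem_filter.1 ha).2, h⟩⟩

def IsKIndependent {W : Type*} [Fintype W] [DecidableEq W] (G : Ω → U → W) (k : ℕ) : Prop :=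
  ∀ T : Finset U, T.card ≤ k → ∀ g : U → W,
    (univ.filter fun ω => ∀ x ∈ T, G ω x = g x).card * Fintype.card W ^ T.card = Fintype.card Ω

theorem IsKIndependent.card_filter_restrict_mul_eq {W : Type*} [Fintype W] [DecidableEq W]
    [Nonempty W] {G : Ω → U → W} {k : ℕ} (hG : IsKIndependent G k) {S : Finset U}
    (hS : #S ≤ k) (P : (S → W) → Prop) [DecidablePred P] :
    #{ω | P fun x : S => G ω x} * Fintype.card W ^ #S = #{g | P g} * Fintype.card Ω := by
  refine card_filter_comp_mul_eq _ (fun g => ?_) P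
  convert hG S hS (fun x => if hx : x ∈ S then g ⟨x, hx⟩ else Classical.arbitrary W) using 3
  ext ω
  simp only [mem_filter, mem_univ, true_and, funext_iff, Subtype.forall]
  exact forall₂_congr fun x hx => by rw [dif_pos hx]

variable {ι V : Type*} [Fintype ι] [DecidableEq ι] [Fintype V] [DecidableEq V] [Nonempty V]
  {G : Ω → U → ι → V} {k n : ℕ} {S : Finset U}

theorem IsKIndependent.card_forall_noSingletonFiber_sq_mul_le (hG : IsKIndependent G k)
    (hS : #S ≤ k) (hV : 2 * #S * 2 ^ n ≤ Fintype.card V) :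
    #{ω | ∀ i, NoSingletonFiber fun x : S => G ω x i} ^ 2 * 2 ^ (Fintype.card ι * n * #S)
      ≤ Fintype.card Ω ^ 2 := by
  set N := Fintype.card V
  set d := Fintype.card ι
  have hE := hG.card_filter_restrict_mul_eq hS fun g => ∀ i, NoSingletonFiber fun x => g x i
  beta_reduce at hE
  rw [card_filter_forall_coord (P := NoSingletonFiber), Fintype.card_fun] at hE
  have hB : #{f : S → V | NoSingletonFiber f} ^ 2 * 2 ^ (n * #S) ≤ N ^ (2 * #S) := by
    have hSN : #S ≤ N := le_trans (by nlinarith [Nat.one_le_two_pow (n := n)]) hV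
    have hcount := card_filter_noSingletonFiber_le (α := S) (β := V) (h := #S / 2)
      (by simp; omega) (by omega)
    rw [Fintype.card_coe] at hcount
    refine (Nat.mul_le_mul_right _ (Nat.pow_le_pow_left hcount 2)).trans ?_
    exact choose_mul_pow_sq_mul_two_pow_le (by omega)
      (le_trans (Nat.mul_le_mul_right _ (by omega)) hV)
  refine Nat.le_of_mul_le_mul_right (c := ((N ^ d) ^ #S) ^ 2) ?_ (by positivity)
  calc _ = (#{ω | ∀ i, NoSingletonFiber fun x : S => G ω x i} * (N ^ d) ^ #S) ^ 2
        * 2 ^ (d * n * #S) := by ring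
    _ = (#{f : S → V | NoSingletonFiber f} ^ 2 * 2 ^ (n * #S)) ^ d * Fintype.card Ω ^ 2 := by
        rw [hE]; ring
    _ ≤ (N ^ (2 * #S)) ^ d * Fintype.card Ω ^ 2 := by gcongr
    _ = Fintype.card Ω ^ 2 * ((N ^ d) ^ #S) ^ 2 := by ring

theorem IsKIndependent.card_forall_noSingletonFiber_le (hG : IsKIndependent G k)
    (hS : #S ≤ k) (hV : 2 * #S * 2 ^ n ≤ Fintype.card V) :
    (#{ω | ∀ i, NoSingletonFiber fun x : S => G ω x i} : ℝ)
      ≤ Fintype.card Ω * ((2 : ℝ) ^ (-((Fintype.card ι * n : ℝ) / 2))) ^ #S := by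
  have h := hG.card_forall_noSingletonFiber_sq_mul_le hS hV
  rw [← Nat.cast_mul]
  exact le_mul_two_rpow_neg_half_pow (by positivity) (by positivity) (by exact_mod_cast h)

theorem IsKIndependent.card_not_isKUnique_le [Fintype U] [Nonempty ι]
    (hG : IsKIndependent G k) (hV : 2 * k * 2 ^ n ≤ Fintype.card V) :
    (#{ω | ¬ IsKUnique (G ω) k} : ℝ) ≤ Fintype.card Ω *
      ∑ S ∈ (univ : Finset U).powerset with 2 ≤ #S,
        ((2 : ℝ) ^ (-((Fintype.card ι * n : ℝ) / 2))) ^ #S := by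
  calc _ ≤ ∑ S ∈ (univ : Finset U).powerset with 2 ≤ #S ∧ #S ≤ k,
          (#{ω | ∀ i, NoSingletonFiber fun x : S => G ω x i} : ℝ) := by
        exact_mod_cast card_filter_not_isKUnique_le G k
    _ ≤ ∑ S ∈ (univ : Finset U).powerset with 2 ≤ #S ∧ #S ≤ k,
          Fintype.card Ω * ((2 : ℝ) ^ (-((Fintype.card ι * n : ℝ) / 2))) ^ #S := by
        refine sum_le_sum fun S hS => ?_
        have hSk := (mem_filter.1 hS).2.2
        exact hG.card_forall_noSingletonFiber_le hSk (le_trans (by gcongr) hV)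
    _ ≤ _ := by
        rw [mul_sum]
        exact sum_le_sum_of_subset_of_nonneg (monotone_filter_right _ fun _ _ h => h.1)
          fun _ _ _ => by positivity

end Sampling

theorem sum_range_ite_pow_div_factorial_le {x : ℝ} (hx : 0 ≤ x) (L : ℕ) :
    ∑ m ∈ range L, (if 2 ≤ m then x ^ m / m ! else 0) ≤ Real.exp x - 1 - x := by
  calc _ ≤ ∑ m ∈ range (L + 2), (if 2 ≤ m then x ^ m / m ! else 0) :=
        sum_le_sum_of_subset_of_nonneg (range_subset_range.2 (by omega))
          fun _ _ _ => by positivity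
    _ = ∑ m ∈ range (L + 2), (x ^ m / m !) - 1 - x := by
        simp [sum_range_succ']
    _ ≤ Real.exp x - 1 - x := by
        linarith [Real.sum_le_exp_of_nonneg hx (L + 2)]

theorem sum_powerset_pow_card_le_sq {α : Type*} (s : Finset α) {q : ℝ} (hq : 0 ≤ q)
    (hsq : #s * q ≤ 1) : ∑ t ∈ s.powerset with 2 ≤ #t, q ^ #t ≤ (#s * q) ^ 2 := by
  rw [sum_filter, sum_powerset_apply_card fun m => if 2 ≤ m then q ^ m else 0]
  calc _ ≤ ∑ m ∈ range (#s + 1), (if 2 ≤ m then (#s * q) ^ m / m ! else 0) := by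
        refine sum_le_sum fun m _ => ?_
        split_ifs
        · rw [nsmul_eq_mul, mul_pow, mul_div_right_comm]
          exact mul_le_mul_of_nonneg_right (Nat.choose_le_pow_div m #s) (by positivity)
        · simp
    _ ≤ Real.exp (#s * q) - 1 - #s * q := sum_range_ite_pow_div_factorial_le (by positivity) _
    _ ≤ (#s * q) ^ 2 := (abs_le.1 (Real.abs_exp_sub_one_sub_id_le
        (by rw [abs_of_nonneg (by positivity)]; exact hsq))).2

theorem sum_powerset_pow_card_le {α : Type*} (s : Finset α) {q : ℝ} (hq : 0 ≤ q)
    (hsq : (#s : ℝ) ^ 2 * q ≤ 1) : ∑ t ∈ s.powerset with 2 ≤ #t, q ^ #t ≤ q := by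
  have hs : (#s : ℝ) ≤ #s ^ 2 := by exact_mod_cast Nat.le_self_pow two_ne_zero _
  calc _ ≤ (#s * q) ^ 2 := sum_powerset_pow_card_le_sq s hq (by nlinarith)
    _ = (#s ^ 2 * q) * q := by ring
    _ ≤ q := by nlinarith

theorem one_sub_mul_card_le_card_filter {Ω : Type*} [Fintype Ω] (P : Ω → Prop) [DecidablePred P]
    {q : ℝ} (h : (#{ω | ¬ P ω} : ℝ) ≤ q * Fintype.card Ω) :
    (1 - q) * Fintype.card Ω ≤ #{ω | P ω} := by
  have hsplit := card_filter_add_card_filter_not (s := univ) P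
  rw [card_univ] at hsplit
  have hsplitℝ : (#{ω | P ω} : ℝ) + #{ω | ¬ P ω} = Fintype.card Ω := by exact_mod_cast hsplit
  linarith

theorem stmt9_general (c n κ m d : ℕ)
    (hm : n + κ + 1 ≤ m) (hd : 4 * c ≤ d)
    {Ω : Type*} [Fintype Ω]
    (G : Ω → (Fin c → Fin (2 ^ n)) → (Fin d → Fin (2 ^ m)))
    (hindep : ∀ T : Finset (Fin c → Fin (2 ^ n)), T.card ≤ 2 ^ κ →
      ∀ g : (Fin c → Fin (2 ^ n)) → (Fin d → Fin (2 ^ m)),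
        ((Finset.univ.filter (fun ω : Ω => ∀ x ∈ T, G ω x = g x)).card
            * Fintype.card (Fin d → Fin (2 ^ m)) ^ T.card : ℕ)
          = Fintype.card Ω) :
    (1 - (2 : ℝ) ^ (-((d * n : ℝ) / 2))) * (Fintype.card Ω : ℝ)
      ≤ ((Finset.univ.filter (fun ω : Ω =>
          ∀ S : Finset (Fin c → Fin (2 ^ n)), S.Nonempty → S.card ≤ 2 ^ κ →
            ∃ x ∈ S, 0 < ((nbr (G ω) {x}) \ (nbr (G ω) (S.erase x))).card)).card : ℝ) := by
  rcases Nat.eq_zero_or_pos d with rfl | hd0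
  · simp
  have : Nonempty (Fin d) := ⟨⟨0, hd0⟩⟩
  -- `hindep` is `IsKIndependent G (2 ^ κ)` up to the `Decidable` instances of its filters.
  have hG : IsKIndependent G (2 ^ κ) := fun T hT g => by convert hindep T hT g
  have hV : 2 * 2 ^ κ * 2 ^ n ≤ Fintype.card (Fin (2 ^ m)) := by
    rw [Fintype.card_fin, ← pow_succ', ← pow_add]
    exact Nat.pow_le_pow_right two_pos (by omega)
  have hMq : (#(univ : Finset (Fin c → Fin (2 ^ n))) : ℝ) ^ 2 * 2 ^ (-((d * n : ℝ) / 2)) ≤ 1 := by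
    rw [card_univ, Fintype.card_fun, Fintype.card_fin, Fintype.card_fin, ← pow_mul, Nat.cast_pow,
      Nat.cast_ofNat]
    exact two_pow_sq_mul_two_rpow_le_one hd
  refine one_sub_mul_card_le_card_filter (fun ω => IsKUnique (G ω) (2 ^ κ)) ?_
  calc _ ≤ Fintype.card Ω * ∑ S ∈ (univ : Finset (Fin c → Fin (2 ^ n))).powerset with 2 ≤ #S,
          ((2 : ℝ) ^ (-((d * n : ℝ) / 2))) ^ #S :=
        (hG.card_not_isKUnique_le hV).trans_eq (by rw [Fintype.card_fin])
    _ ≤ Fintype.card Ω * 2 ^ (-((d * n : ℝ) / 2)) := by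
        gcongr
        exact sum_powerset_pow_card_le _ (by positivity) hMq
    _ = _ := mul_comm _ _

/-- Lemma 2, first part: a `2^κ`-independent random function
`({0,1}^n)^c → ({0,1}^m)^d` with `m ≥ n + κ + 1` and `d ≥ 4c` is `2^κ`-unique
with probability at least `1 − 2^{−dn/2}`. -/
theorem stmt9 (c n κ m d : ℕ) (hc : 0 < c) (hn : 0 < n) (hκ : 0 < κ)
    (hm : n + κ + 1 ≤ m) (hd : 4 * c ≤ d)
    {Ω : Type*} [Fintype Ω] [Nonempty Ω]
    (G : Ω → (Fin c → Fin (2 ^ n)) → (Fin d → Fin (2 ^ m)))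
    (hindep : ∀ T : Finset (Fin c → Fin (2 ^ n)), T.card ≤ 2 ^ κ →
      ∀ g : (Fin c → Fin (2 ^ n)) → (Fin d → Fin (2 ^ m)),
        ((Finset.univ.filter (fun ω : Ω => ∀ x ∈ T, G ω x = g x)).card
            * Fintype.card (Fin d → Fin (2 ^ m)) ^ T.card : ℕ)
          = Fintype.card Ω) :
    (1 - (2 : ℝ) ^ (-((d * n : ℝ) / 2))) * (Fintype.card Ω : ℝ)
      ≤ ((Finset.univ.filter (fun ω : Ω =>
          ∀ S : Finset (Fin c → Fin (2 ^ n)), S.Nonempty → S.card ≤ 2 ^ κ →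
            ∃ x ∈ S, 0 < ((nbr (G ω) {x}) \ (nbr (G ω) (S.erase x))).card)).card : ℝ) :=
  stmt9_general c n κ m d hm hd G hindep
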